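/- arXiv:1408.3294 — 3 statements merged into one kernel-verified Lean document; each statement's English description precedes it below -/
import Mathlib

section
/- Let p be a positive integer, q ∈ (0,1), s, t > 0, and let m be a positive odd integer. Then ψ_{p,q}^{(m)}(s) · ψ_{p,q}^{(m)}(t) ≥ (ψ_{p,q}^{(m)}(s+t))^2. -/
open Finset

/-- The m-th derivative of the (p,q)-digamma function,
`ψ_{p,q}^{(m)}(t) = (ln q)^{m+1} ∑_{n=1}^p n^m q^{n t}/(1 - q^n)`. -/
noncomputable def psiPQDeriv (p : ℕ) (q : ℝ) (m : ℕ) (t : ℝ) : ℝ :=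
  (Real.log q) ^ (m + 1) *
    ∑ n ∈ Finset.Icc 1 p, (n : ℝ) ^ m * q ^ ((n : ℝ) * t) / (1 - q ^ n)

/-! For odd `m` the prefactor `(ln q)^{m+1}` is an even power, so `ψ_{p,q}^{(m)}` is a nonnegative
combination of the decreasing exponentials `t ↦ q^{n t}`. A nonnegative antitone function `f`
satisfies `f (s + t) ≤ f s` and `f (s + t) ≤ f t` for `s, t ≥ 0`, and multiplying these gives
`f (s + t)^2 ≤ f s * f t`. -/

theorem sq_map_add_le_mul_of_antitone {α β : Type*} [AddCommMonoid α] [PartialOrder α]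
    [IsOrderedAddMonoid α] [Semiring β] [PartialOrder β] [IsOrderedRing β] {f : α → β}
    (hf : Antitone f) (hf₀ : ∀ x, 0 ≤ f x) {s t : α} (hs : 0 ≤ s) (ht : 0 ≤ t) :
    f (s + t) ^ 2 ≤ f s * f t := by
  rw [sq]
  exact mul_le_mul (hf (le_add_of_nonneg_right ht)) (hf (le_add_of_nonneg_left hs))
    (hf₀ _) (hf₀ _)

theorem psiPQ_term_nonneg {q : ℝ} (hq₀ : 0 < q) (hq₁ : q ≤ 1) (m n : ℕ) (t : ℝ) :
    0 ≤ (n : ℝ) ^ m * q ^ ((n : ℝ) * t) / (1 - q ^ n) :=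
  div_nonneg (by positivity) (sub_nonneg.mpr (pow_le_one₀ hq₀.le hq₁))

theorem psiPQ_term_antitone {q : ℝ} (hq₀ : 0 < q) (hq₁ : q ≤ 1) (m n : ℕ) :
    Antitone fun t : ℝ => (n : ℝ) ^ m * q ^ ((n : ℝ) * t) / (1 - q ^ n) := by
  intro t u htu
  have hexp : q ^ ((n : ℝ) * u) ≤ q ^ ((n : ℝ) * t) :=
    Real.antitone_rpow_of_base_le_one hq₀ hq₁ (mul_le_mul_of_nonneg_left htu n.cast_nonneg)
  exact div_le_div_of_nonneg_right (mul_le_mul_of_nonneg_left hexp (by positivity))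
    (sub_nonneg.mpr (pow_le_one₀ hq₀.le hq₁))

theorem psiPQDeriv_nonneg (p : ℕ) {q : ℝ} (hq₀ : 0 < q) (hq₁ : q ≤ 1) {m : ℕ} (hm : Odd m)
    (t : ℝ) : 0 ≤ psiPQDeriv p q m t :=
  mul_nonneg (hm.add_one.pow_nonneg _) (sum_nonneg fun n _ => psiPQ_term_nonneg hq₀ hq₁ m n t)

theorem psiPQDeriv_antitone (p : ℕ) {q : ℝ} (hq₀ : 0 < q) (hq₁ : q ≤ 1) {m : ℕ} (hm : Odd m) :
    Antitone (psiPQDeriv p q m) :=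
  Antitone.const_mul (fun _ _ htu => sum_le_sum fun n _ => psiPQ_term_antitone hq₀ hq₁ m n htu)
    (hm.add_one.pow_nonneg _)

theorem psiPQDeriv_mul_ge_sq_general (p : ℕ) (q : ℝ) (hq : q ∈ Set.Ioo (0 : ℝ) 1)
    (s t : ℝ) (hs : 0 < s) (ht : 0 < t) (m : ℕ) (hodd : Odd m) :
    psiPQDeriv p q m s * psiPQDeriv p q m t ≥ (psiPQDeriv p q m (s + t)) ^ 2 :=
  sq_map_add_le_mul_of_antitone (psiPQDeriv_antitone p hq.1 hq.2.le hodd)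
    (psiPQDeriv_nonneg p hq.1 hq.2.le hodd) hs.le ht.le

theorem psiPQDeriv_mul_ge_sq (p : ℕ) (hp : 0 < p) (q : ℝ) (hq : q ∈ Set.Ioo (0 : ℝ) 1)
    (s t : ℝ) (hs : 0 < s) (ht : 0 < t) (m : ℕ) (hm : 0 < m) (hodd : Odd m) :
    psiPQDeriv p q m s * psiPQDeriv p q m t ≥ (psiPQDeriv p q m (s + t)) ^ 2 :=
  psiPQDeriv_mul_ge_sq_general p q hq s t hs ht m hodd
end

section
/- Let p be a positive integer, q ∈ (0,1) and 0 < s ≤ 1. Then −ln [p]_q − (ln q) ∑_{n=1}^{p} q^{n s}/(1 - q^n) ≥ 0; equivalently, ψ_{p,q}(s) ≤ 0 for all 0 < s ≤ 1. -/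
open Finset

/-- The (p,q)-analogue of the digamma function,
`ψ_{p,q}(t) = ln [p]_q + (ln q) ∑_{n=1}^p q^{n t}/(1 - q^n)` with `[p]_q = (1-q^p)/(1-q)`. -/
noncomputable def psiPQ (p : ℕ) (q : ℝ) (t : ℝ) : ℝ :=
  Real.log ((1 - q ^ p) / (1 - q)) +
    Real.log q * ∑ n ∈ Finset.Icc 1 p, q ^ ((n : ℝ) * t) / (1 - q ^ n)

/-! Since `ln q < 0` and `t ↦ q^{nt}` decreases, `ψ_{p,q}` is increasing, so it suffices to
show `ψ_{p,q}(1) ≤ 0`. Writing `[p]_q` as the telescoping product of the ratios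
`(1 - q^{n+1})/(1 - q^n)` and bounding `ln x ≤ x - 1` and `1 - q ≤ -ln q` termwise gives
`ln [p]_q ≤ (-ln q) ∑_{n=1}^{p-1} q^n/(1 - q^n)`, which is at most `-(ln q) ∑_{n=1}^{p} q^n/(1 - q^n)`. -/

section

variable {q : ℝ} (hq : q ∈ Set.Ioo (0 : ℝ) 1)
include hq

theorem one_sub_pow_pos {n : ℕ} (hn : n ≠ 0) : 0 < 1 - q ^ n :=
  sub_pos.2 (pow_lt_one₀ hq.1.le hq.2 hn)

theorem log_one_sub_pow_succ_div_one_sub_pow_le {n : ℕ} (hn : n ≠ 0) :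
    Real.log ((1 - q ^ (n + 1)) / (1 - q ^ n)) ≤ -Real.log q * (q ^ n / (1 - q ^ n)) := by
  have hden := one_sub_pow_pos hq hn
  have hnum := one_sub_pow_pos hq n.succ_ne_zero
  have hlog : 1 - q ≤ -Real.log q := by linarith [Real.log_le_sub_one_of_pos hq.1]
  calc Real.log ((1 - q ^ (n + 1)) / (1 - q ^ n))
      ≤ (1 - q ^ (n + 1)) / (1 - q ^ n) - 1 := Real.log_le_sub_one_of_pos (div_pos hnum hden)
    _ = (1 - q) * (q ^ n / (1 - q ^ n)) := by field_simp; ring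
    _ ≤ -Real.log q * (q ^ n / (1 - q ^ n)) :=
      mul_le_mul_of_nonneg_right hlog (div_nonneg (pow_pos hq.1 n).le hden.le)

theorem log_one_sub_pow_succ_div_one_sub_le (p : ℕ) :
    Real.log ((1 - q ^ (p + 1)) / (1 - q)) ≤
      -Real.log q * ∑ n ∈ Icc 1 p, q ^ n / (1 - q ^ n) := by
  induction p with
  | zero => simp
  | succ p ih =>
    have h₀ : 0 < 1 - q := sub_pos.2 hq.2
    have h₁ : 0 < 1 - q ^ (p + 1) := one_sub_pow_pos hq p.succ_ne_zero
    have h₂ : 0 < 1 - q ^ (p + 1 + 1) := one_sub_pow_pos hq (p + 1).succ_ne_zero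
    have hsplit : (1 - q ^ (p + 1 + 1)) / (1 - q) =
        (1 - q ^ (p + 1)) / (1 - q) * ((1 - q ^ (p + 1 + 1)) / (1 - q ^ (p + 1))) := by
      field_simp
    rw [hsplit, Real.log_mul (div_pos h₁ h₀).ne' (div_pos h₂ h₁).ne',
      sum_Icc_succ_top (by omega), mul_add]
    linarith [log_one_sub_pow_succ_div_one_sub_pow_le hq (n := p + 1) p.succ_ne_zero]

theorem log_one_sub_pow_div_one_sub_le (p : ℕ) :
    Real.log ((1 - q ^ p) / (1 - q)) ≤ -Real.log q * ∑ n ∈ Icc 1 p, q ^ n / (1 - q ^ n) := by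
  cases p with
  | zero => simp
  | succ p =>
    refine (log_one_sub_pow_succ_div_one_sub_le hq p).trans (mul_le_mul_of_nonneg_left ?_ ?_)
    · rw [sum_Icc_succ_top (by omega)]
      exact le_add_of_nonneg_right
        (div_nonneg (pow_pos hq.1 _).le (one_sub_pow_pos hq p.succ_ne_zero).le)
    · exact neg_nonneg.2 (Real.log_nonpos hq.1.le hq.2.le)

theorem psiPQ_monotone (p : ℕ) : Monotone (psiPQ p q) := by
  intro s t hst
  refine add_le_add_right (mul_le_mul_of_nonpos_left (sum_le_sum fun n _ => ?_)
    (Real.log_nonpos hq.1.le hq.2.le)) _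
  refine div_le_div_of_nonneg_right ?_ (sub_nonneg.2 (pow_le_one₀ hq.1.le hq.2.le))
  exact Real.rpow_le_rpow_of_exponent_ge hq.1 hq.2.le (by gcongr)

theorem psiPQ_one_nonpos (p : ℕ) : psiPQ p q 1 ≤ 0 := by
  have h := log_one_sub_pow_div_one_sub_le hq p
  simp only [psiPQ, mul_one, Real.rpow_natCast]
  linarith

end

theorem psiPQ_nonpos_general (p : ℕ) (q : ℝ) (hq : q ∈ Set.Ioo (0 : ℝ) 1)
    (s : ℝ) (hs1 : s ≤ 1) :
    0 ≤ -Real.log ((1 - q ^ p) / (1 - q)) -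
        Real.log q * ∑ n ∈ Finset.Icc 1 p, q ^ ((n : ℝ) * s) / (1 - q ^ n) ∧
      psiPQ p q s ≤ 0 := by
  have hpsi : psiPQ p q s ≤ 0 := (psiPQ_monotone hq p hs1).trans (psiPQ_one_nonpos hq p)
  refine ⟨?_, hpsi⟩
  unfold psiPQ at hpsi
  linarith

theorem psiPQ_nonpos (p : ℕ) (hp : 0 < p) (q : ℝ) (hq : q ∈ Set.Ioo (0 : ℝ) 1)
    (s : ℝ) (hs0 : 0 < s) (hs1 : s ≤ 1) :
    0 ≤ -Real.log ((1 - q ^ p) / (1 - q)) -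
        Real.log q * ∑ n ∈ Finset.Icc 1 p, q ^ ((n : ℝ) * s) / (1 - q ^ n) ∧
      psiPQ p q s ≤ 0 :=
  psiPQ_nonpos_general p q hq s hs1
end

section
/- Let p be a positive integer, q ∈ (0,1), s > 0, and let m be a positive integer. Then lim_{t→∞} [ψ_{p,q}^{(m)}(s+t) − ψ_{p,q}^{(m)}(s) − ψ_{p,q}^{(m)}(t)] = −(ln q)^{m+1} ∑_{n=1}^{p} n^m q^{n s}/(1 - q^n), and this limit is ≤ 0 when m is odd and ≥ 0 when m is even. -/
open Finset

/-! Every term of `ψ_{p,q}^{(m)}` decays like `q^{n t}`, so `ψ_{p,q}^{(m)}(t) → 0` and the limit is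
`-ψ_{p,q}^{(m)}(s)`. Its sign is that of `-(ln q)^{m+1}`, since the sum is a sum of nonnegative
terms and `ln q < 0`. -/

open Filter Topology

section PsiPQDeriv

variable {p : ℕ} {q : ℝ} {m : ℕ}

theorem psiPQDeriv_tendsto_zero (hq : |q| < 1) :
    Tendsto (psiPQDeriv p q m) atTop (𝓝 0) := by
  have hq' := abs_lt.mp hq
  have hterm : ∀ n ∈ Icc 1 p, Tendsto (fun t : ℝ => (n : ℝ) ^ m * q ^ ((n : ℝ) * t) / (1 - q ^ n))
      atTop (𝓝 0) := by
    intro n hn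
    have hn : (0 : ℝ) < n := by exact_mod_cast (mem_Icc.mp hn).1
    have hpow : Tendsto (fun t : ℝ => q ^ ((n : ℝ) * t)) atTop (𝓝 0) :=
      (tendsto_rpow_atTop_of_base_lt_one q hq'.1 hq'.2).comp (tendsto_id.const_mul_atTop hn)
    simpa using (hpow.const_mul ((n : ℝ) ^ m)).div_const (1 - q ^ n)
  have hsum := (tendsto_finsetSum _ hterm).const_mul (Real.log q ^ (m + 1))
  rwa [sum_const_zero, mul_zero] at hsum

theorem sum_psiPQDeriv_nonneg (hq₀ : 0 ≤ q) (hq₁ : q < 1) (t : ℝ) :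
    0 ≤ ∑ n ∈ Icc 1 p, (n : ℝ) ^ m * q ^ ((n : ℝ) * t) / (1 - q ^ n) := by
  refine sum_nonneg fun n hn => div_nonneg (by positivity) ?_
  exact sub_nonneg.mpr (pow_lt_one₀ hq₀ hq₁ (by grind)).le

theorem psiPQDeriv_nonneg_of_odd (hq₀ : 0 ≤ q) (hq₁ : q < 1) (hm : Odd m) (t : ℝ) :
    0 ≤ psiPQDeriv p q m t :=
  mul_nonneg (hm.add_one.pow_nonneg _) (sum_psiPQDeriv_nonneg hq₀ hq₁ t)

theorem psiPQDeriv_nonpos_of_even (hq₀ : 0 ≤ q) (hq₁ : q < 1) (hm : Even m) (t : ℝ) :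
    psiPQDeriv p q m t ≤ 0 :=
  mul_nonpos_of_nonpos_of_nonneg (hm.add_one.pow_nonpos (Real.log_nonpos hq₀ hq₁.le))
    (sum_psiPQDeriv_nonneg hq₀ hq₁ t)

end PsiPQDeriv

theorem psiPQDeriv_limit_general (p : ℕ) (q : ℝ) (hq : q ∈ Set.Ioo (0 : ℝ) 1)
    (s : ℝ) (m : ℕ) :
    Filter.Tendsto (fun t => psiPQDeriv p q m (s + t) - psiPQDeriv p q m s - psiPQDeriv p q m t)
      Filter.atTop
      (nhds (-(Real.log q ^ (m + 1) *
        ∑ n ∈ Finset.Icc 1 p, (n : ℝ) ^ m * q ^ ((n : ℝ) * s) / (1 - q ^ n)))) ∧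
    (Odd m →
      -(Real.log q ^ (m + 1) *
        ∑ n ∈ Finset.Icc 1 p, (n : ℝ) ^ m * q ^ ((n : ℝ) * s) / (1 - q ^ n)) ≤ 0) ∧
    (Even m →
      0 ≤ -(Real.log q ^ (m + 1) *
        ∑ n ∈ Finset.Icc 1 p, (n : ℝ) ^ m * q ^ ((n : ℝ) * s) / (1 - q ^ n))) := by
  obtain ⟨hq₀, hq₁⟩ := hq
  show Tendsto _ atTop (𝓝 (-psiPQDeriv p q m s)) ∧ (Odd m → -psiPQDeriv p q m s ≤ 0) ∧
    (Even m → 0 ≤ -psiPQDeriv p q m s)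
  have hzero : Tendsto (psiPQDeriv p q m) atTop (𝓝 0) :=
    psiPQDeriv_tendsto_zero (abs_lt.mpr ⟨by linarith, hq₁⟩)
  have hshift : Tendsto (fun t => psiPQDeriv p q m (s + t)) atTop (𝓝 0) :=
    hzero.comp (tendsto_atTop_add_const_left _ s tendsto_id)
  refine ⟨by simpa using (hshift.sub_const (psiPQDeriv p q m s)).sub hzero, fun hm => ?_,
    fun hm => ?_⟩
  · exact neg_nonpos.mpr (psiPQDeriv_nonneg_of_odd hq₀.le hq₁ hm s)
  · exact neg_nonneg.mpr (psiPQDeriv_nonpos_of_even hq₀.le hq₁ hm s)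

theorem psiPQDeriv_limit (p : ℕ) (hp : 0 < p) (q : ℝ) (hq : q ∈ Set.Ioo (0 : ℝ) 1)
    (s : ℝ) (hs : 0 < s) (m : ℕ) (hm : 0 < m) :
    Filter.Tendsto (fun t => psiPQDeriv p q m (s + t) - psiPQDeriv p q m s - psiPQDeriv p q m t)
      Filter.atTop
      (nhds (-(Real.log q ^ (m + 1) *
        ∑ n ∈ Finset.Icc 1 p, (n : ℝ) ^ m * q ^ ((n : ℝ) * s) / (1 - q ^ n)))) ∧
    (Odd m →
      -(Real.log q ^ (m + 1) *
        ∑ n ∈ Finset.Icc 1 p, (n : ℝ) ^ m * q ^ ((n : ℝ) * s) / (1 - q ^ n)) ≤ 0) ∧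
    (Even m →
      0 ≤ -(Real.log q ^ (m + 1) *
        ∑ n ∈ Finset.Icc 1 p, (n : ℝ) ^ m * q ^ ((n : ℝ) * s) / (1 - q ^ n))) :=
  psiPQDeriv_limit_general p q hq s m
end
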